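/- Fix ε > 0. If the edges of K_n are independently uniformly colored with r = r(n) ≥ n^{4+ε} colors, then for every k ≤ n, the probability that there exists a heterochromatic k-clique tends to 1 as n → ∞. -/

import Mathlib

open Finset Filter

open scoped Classical

noncomputable section

/-- A finset of edges of `K_n` forms a matching: all edges are proper (non-loop)
and no two distinct edges share a vertex. -/
def IsMatching {n : ℕ} (M : Finset (Sym2 (Fin n))) : Prop :=
  (∀ e ∈ M, ¬ e.IsDiag) ∧
    ∀ e ∈ M, ∀ f ∈ M, e ≠ f → ∀ v : Fin n, v ∈ e → v ∉ f

/-- The finset of all `k`-matchings of `K_n`. -/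
def matchings (n k : ℕ) : Finset (Finset (Sym2 (Fin n))) :=
  Finset.univ.filter fun M => M.card = k ∧ IsMatching M

/-- All edges in `M` receive the same color under the coloring `c`. -/
def Monochromatic {n r : ℕ} (c : Sym2 (Fin n) → Fin r)
    (M : Finset (Sym2 (Fin n))) : Prop :=
  ∃ col, ∀ e ∈ M, c e = col

/-- Distinct edges in `M` receive pairwise distinct colors under `c`. -/
def Heterochromatic {n r : ℕ} (c : Sym2 (Fin n) → Fin r)
    (M : Finset (Sym2 (Fin n))) : Prop :=
  ∀ e ∈ M, ∀ f ∈ M, e ≠ f → c e ≠ c f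

/-- Probability of an event `P` under a uniformly random `r`-coloring of the
edges of `K_n`. -/
def Pr (n r : ℕ) (P : (Sym2 (Fin n) → Fin r) → Prop) : ℚ :=
  ((Finset.univ.filter P).card : ℚ) / (Fintype.card (Sym2 (Fin n) → Fin r) : ℚ)

/-- Expected number of monochromatic `k`-matchings in a uniformly random
`r`-coloring of the edges of `K_n`. -/
def EXmono (n r k : ℕ) : ℚ :=
  (∑ c : Sym2 (Fin n) → Fin r,
      (((matchings n k).filter fun M => Monochromatic c M).card : ℚ)) /
    (Fintype.card (Sym2 (Fin n) → Fin r) : ℚ)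

/-- Expected number of heterochromatic `k`-matchings in a uniformly random
`r`-coloring of the edges of `K_n`. -/
def EYhet (n r k : ℕ) : ℚ :=
  (∑ c : Sym2 (Fin n) → Fin r,
      (((matchings n k).filter fun M => Heterochromatic c M).card : ℚ)) /
    (Fintype.card (Sym2 (Fin n) → Fin r) : ℚ)

/-- The vertex set `S` spans a monochromatic clique: all edges between distinct
vertices of `S` have one common color. -/
def MonoClique {n r : ℕ} (c : Sym2 (Fin n) → Fin r) (S : Finset (Fin n)) : Prop :=
  ∃ col, ∀ u ∈ S, ∀ v ∈ S, u ≠ v → c s(u, v) = col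

/-- The vertex set `S` spans a heterochromatic clique: distinct edges between
vertices of `S` have pairwise distinct colors. -/
def HeteroClique {n r : ℕ} (c : Sym2 (Fin n) → Fin r) (S : Finset (Fin n)) : Prop :=
  ∀ u ∈ S, ∀ v ∈ S, ∀ w ∈ S, ∀ x ∈ S,
    u ≠ v → w ≠ x → s(u, v) ≠ s(w, x) → c s(u, v) ≠ c s(w, x)

/-- `T` is the edge set of a tree with vertex set `S`: it consists of
`S.card - 1` proper edges inside `S` and connects all vertices of `S`
(a connected graph on `|S|` vertices with `|S| - 1` edges is a tree). -/
def IsTreeOn {n : ℕ} (S : Finset (Fin n)) (T : Finset (Sym2 (Fin n))) : Prop :=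
  T.card + 1 = S.card ∧ (∀ e ∈ T, ¬ e.IsDiag) ∧
    (∀ e ∈ T, ∀ v : Fin n, v ∈ e → v ∈ S) ∧
    ∀ u ∈ S, ∀ v ∈ S,
      (SimpleGraph.fromEdgeSet (↑T : Set (Sym2 (Fin n)))).Reachable u v

/-!
An injective coloring makes every vertex set heterochromatic, so it suffices that a uniformly
random coloring of the `N ≤ n²` edges of `K_n` is injective with probability tending to one.
By the birthday bound, that probability is
`r(r-1)⋯(r-N+1) / r^N ≥ (1 - N/r)^N ≥ 1 - N²/r ≥ 1 - n⁴/r ≥ 1 - n^(-ε)`,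
the middle step being Bernoulli's inequality.
-/

open Function

lemma one_sub_sq_div_le_descFactorial_div_pow {K : Type*} [Field K] [LinearOrder K]
    [IsStrictOrderedRing K] {N r : ℕ} (h : N ^ 2 ≤ r) :
    1 - (N : K) ^ 2 / r ≤ r.descFactorial N / (r : K) ^ N := by
  rcases N.eq_zero_or_pos with rfl | hN
  · simp
  have hNr : N ≤ r := (Nat.le_self_pow two_ne_zero N).trans h
  have hr : (0 : K) < r := by exact_mod_cast hN.trans_le hNr
  have hNr' : (N : K) / r ≤ 1 := div_le_one_of_le₀ (by exact_mod_cast hNr) hr.le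
  calc 1 - (N : K) ^ 2 / r = 1 + N * -(N / r) := by ring
    _ ≤ (1 + -(N / r)) ^ N := one_add_mul_le_pow (by linarith) N
    _ ≤ ((r + 1 - N : ℕ) / r : K) ^ N := by
        gcongr
        · linarith
        · rw [le_div_iff₀ hr, Nat.cast_sub (by omega)]
          push_cast
          rw [add_mul, neg_mul, div_mul_cancel₀ _ hr.ne']
          linarith
    _ = ((r + 1 - N) ^ N : ℕ) / (r : K) ^ N := by push_cast [div_pow]; rfl
    _ ≤ r.descFactorial N / (r : K) ^ N := by
        gcongr
        exact_mod_cast r.pow_sub_le_descFactorial N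

lemma one_sub_sq_div_le_card_injective_div {α β : Type*} [Fintype α] [Fintype β]
    [DecidableEq α] [DecidableEq β] [Nonempty β] :
    1 - (Fintype.card α : ℚ) ^ 2 / Fintype.card β
      ≤ Fintype.card {c : α → β // Injective c} / Fintype.card (α → β) := by
  by_cases h : Fintype.card α ^ 2 ≤ Fintype.card β
  · rw [Fintype.card_congr (Equiv.subtypeInjectiveEquivEmbedding α β),
      Fintype.card_embedding_eq, Fintype.card_fun]
    push_cast
    exact one_sub_sq_div_le_descFactorial_div_pow h
  · have hβ : (0 : ℚ) < Fintype.card β := by exact_mod_cast Fintype.card_pos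
    have : 1 - (Fintype.card α : ℚ) ^ 2 / Fintype.card β < 0 := by
      rw [sub_neg, one_lt_div hβ]
      exact_mod_cast not_le.mp h
    exact this.le.trans (div_nonneg (Nat.cast_nonneg _) (Nat.cast_nonneg _))

lemma card_sym2_le_sq (α : Type*) [Fintype α] [DecidableEq α] :
    Fintype.card (Sym2 α) ≤ Fintype.card α ^ 2 := by
  simpa [sq] using Fintype.card_le_of_surjective _ (Sym2.mk_surjective (α := α))

lemma Pr_le_one (n r : ℕ) (P : (Sym2 (Fin n) → Fin r) → Prop) : Pr n r P ≤ 1 :=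
  div_le_one_of_le₀ (by exact_mod_cast card_filter_le _ _) (Nat.cast_nonneg _)

lemma Pr_mono {n r : ℕ} {P Q : (Sym2 (Fin n) → Fin r) → Prop} (h : ∀ c, P c → Q c) :
    Pr n r P ≤ Pr n r Q := by
  unfold Pr
  gcongr
  exact h _

lemma one_sub_sq_div_le_Pr_injective {n r : ℕ} (hr : 0 < r) :
    1 - (Fintype.card (Sym2 (Fin n)) : ℚ) ^ 2 / r ≤ Pr n r Injective := by
  have : Nonempty (Fin r) := ⟨⟨0, hr⟩⟩
  unfold Pr
  rw [← Fintype.card_subtype]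
  simpa using one_sub_sq_div_le_card_injective_div (α := Sym2 (Fin n)) (β := Fin r)

lemma HeteroClique.of_injective {n r : ℕ} {c : Sym2 (Fin n) → Fin r} (hc : Injective c)
    (S : Finset (Fin n)) : HeteroClique c S :=
  fun _ _ _ _ _ _ _ _ _ _ hne h => hne (hc h)

lemma sq_sq_div_le_rpow_neg {ε x y : ℝ} (hx : 0 < x) (hy : x ^ (4 + ε) ≤ y) :
    (x ^ 2) ^ 2 / y ≤ x ^ (-ε) := by
  calc (x ^ 2) ^ 2 / y ≤ x ^ (4 : ℝ) / x ^ (4 + ε) := by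
        rw [← pow_mul, ← Real.rpow_natCast]
        norm_num
        gcongr
    _ = x ^ (-ε) := by rw [← Real.rpow_sub hx]; ring_nf

/-- if `r(n) ≥ n^(4+ε)`, then for every `k(n) ≤ n` the
probability that a heterochromatic `k(n)`-clique exists tends to `1`. -/
theorem hetero_clique_exists (ε : ℝ) (hε : 0 < ε) (r : ℕ → ℕ)
    (hr : ∀ᶠ n : ℕ in atTop, (n : ℝ) ^ ((4 : ℝ) + ε) ≤ (r n : ℝ))
    (k : ℕ → ℕ) (hk : ∀ n, k n ≤ n) :
    Tendsto
      (fun n =>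
        ((Pr n (r n)
            (fun c => ∃ S : Finset (Fin n), S.card = k n ∧ HeteroClique c S) : ℚ) : ℝ))
      atTop (nhds 1) := by
  have hlower : Tendsto (fun n : ℕ => 1 - (n : ℝ) ^ (-ε)) atTop (nhds 1) := by
    simpa using tendsto_const_nhds.sub
      ((tendsto_rpow_neg_atTop hε).comp tendsto_natCast_atTop_atTop)
  refine tendsto_of_tendsto_of_tendsto_of_le_of_le' hlower tendsto_const_nhds ?_
    (Eventually.of_forall fun n => by exact_mod_cast Pr_le_one n (r n) _)
  filter_upwards [hr, eventually_gt_atTop 0] with n hrn hn0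
  have hn : (0 : ℝ) < n := by exact_mod_cast hn0
  have hr0 : 0 < r n := by exact_mod_cast (Real.rpow_pos_of_pos hn _).trans_le hrn
  obtain ⟨S, -, hS⟩ := exists_subset_card_eq (s := (univ : Finset (Fin n))) (by simpa using hk n)
  have hPr : 1 - (Fintype.card (Sym2 (Fin n)) : ℚ) ^ 2 / r n
      ≤ Pr n (r n) fun c => ∃ S : Finset (Fin n), S.card = k n ∧ HeteroClique c S :=
    (one_sub_sq_div_le_Pr_injective hr0).trans
      (Pr_mono fun _ hc => ⟨S, hS, HeteroClique.of_injective hc S⟩)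
  have hN : (Fintype.card (Sym2 (Fin n)) : ℝ) ≤ n ^ 2 := by
    exact_mod_cast (card_sym2_le_sq (Fin n)).trans_eq (by simp)
  calc 1 - (n : ℝ) ^ (-ε) ≤ 1 - ((n : ℝ) ^ 2) ^ 2 / r n := by
        linarith [sq_sq_div_le_rpow_neg hn hrn]
    _ ≤ 1 - (Fintype.card (Sym2 (Fin n)) : ℝ) ^ 2 / r n := by gcongr
    _ ≤ _ := by simpa using (Rat.cast_le (K := ℝ)).mpr hPr

end
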